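/- (Lemma 9.5, first-factor computation) Suppose 1 ≤ p ≤ b, and let a ∈ C_st(Q) with c = E(a). Then a_{1,r_p+1} ≥ a_{l_1+1,r_p+1} ≥ a_{l_2+1,r_p+1} ≥ ... ≥ a_{l_d+1,r_p+1} ≥ 0, where l_1 < ... < l_d are the left-oriented edges below the relevant threshold; this chain of inequalities follows from the nonnegativity of the coordinates of c together with the support-containment property: if the simple root α_{m} occurs in a root α of a given slice and m' appears 'later' along the slice, then α_{m'} also occurs in α. -/

import Mathlib

attribute [local instance] Classical.propDecidable

/-- Position of the `m`-th vertex (0-based) of the slice `S_z` determined by the quiver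
orientation `ε` (`ε m = true`: edge `m` right-oriented; `false`: left-oriented), as a
positive root `(i, j) ↔ α_i + ... + α_j` of `A_n`.  The slice starts at `(z, z)`. -/
def slicePos (ε : ℕ → Bool) (z : ℕ) : ℕ → ℤ × ℤ
  | 0 => ((z : ℤ), (z : ℤ))
  | m + 1 =>
    let p := slicePos ε z m
    if ε (m + 1) then (p.1, p.2 + 1) else (p.1 - 1, p.2)

/-- The `m`-th vertex of `S_z` is a genuine positive root, i.e. belongs to
`T_z = S_z ∩ A(Q_k)`. -/
def inRange (n : ℕ) (ε : ℕ → Bool) (z m : ℕ) : Prop :=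
  1 ≤ (slicePos ε z m).1 ∧ (slicePos ε z m).2 ≤ (n : ℤ)

/-- `Σ_{α ∈ T_z, s ∈ α} c_α`: the sum of `c_α` over the roots `α` of the slice `T_z`
whose support contains the simple root `α_s`. -/
noncomputable def ASum (n : ℕ) (ε : ℕ → Bool) (c : ℤ × ℤ → ℤ) (z : ℕ) (s : ℤ) : ℤ :=
  ∑ m ∈ Finset.range n,
    if inRange n ε z m ∧ (slicePos ε z m).1 ≤ s ∧ s ≤ (slicePos ε z m).2
    then c (slicePos ε z m) else 0

/-- `Σ_{α ∈ T_z, s ∈ α, s' ∉ α} c_α`. -/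
noncomputable def BSum (n : ℕ) (ε : ℕ → Bool) (c : ℤ × ℤ → ℤ) (z : ℕ) (s s' : ℤ) : ℤ :=
  ∑ m ∈ Finset.range n,
    if inRange n ε z m ∧ (slicePos ε z m).1 ≤ s ∧ s ≤ (slicePos ε z m).2 ∧
        ¬((slicePos ε z m).1 ≤ s' ∧ s' ≤ (slicePos ε z m).2)
    then c (slicePos ε z m) else 0

lemma slicePos_fst_le (ε : ℕ → Bool) (z m : ℕ) : (slicePos ε z m).1 ≤ z := by
  induction m with
  | zero => simp [slicePos]
  | succ m ih =>
    simp only [slicePos]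
    split <;> simp <;> omega

lemma le_slicePos_snd (ε : ℕ → Bool) (z m : ℕ) : (z : ℤ) ≤ (slicePos ε z m).2 := by
  induction m with
  | zero => simp [slicePos]
  | succ m ih =>
    simp only [slicePos]
    split <;> simp <;> omega

section ASum

variable {n : ℕ} {ε : ℕ → Bool} {c : ℤ × ℤ → ℤ}

lemma slicePos_coeff_nonneg (hc : ∀ i j : ℤ, 1 ≤ i → i ≤ j → j ≤ (n : ℤ) → 0 ≤ c (i, j))
    {z m : ℕ} (hm : inRange n ε z m) : 0 ≤ c (slicePos ε z m) :=
  hc _ _ hm.1 ((slicePos_fst_le ε z m).trans (le_slicePos_snd ε z m)) hm.2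

lemma ASum_nonneg (hc : ∀ i j : ℤ, 1 ≤ i → i ≤ j → j ≤ (n : ℤ) → 0 ≤ c (i, j))
    (z : ℕ) (s : ℤ) : 0 ≤ ASum n ε c z s :=
  Finset.sum_nonneg fun m _ => by
    split_ifs with h
    · exact slicePos_coeff_nonneg hc h.1
    · exact le_rfl

/-- Every root `[i, j]` of the slice `T_z` contains `z`, so a root whose support contains `s ≤ z`
also contains every `s'` with `s ≤ s' ≤ z`. -/
lemma ASum_mono (hc : ∀ i j : ℤ, 1 ≤ i → i ≤ j → j ≤ (n : ℤ) → 0 ≤ c (i, j))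
    {z : ℕ} {s s' : ℤ} (hss' : s ≤ s') (hs'z : s' ≤ z) :
    ASum n ε c z s ≤ ASum n ε c z s' :=
  Finset.sum_le_sum fun m _ => by
    have hz := le_slicePos_snd ε z m
    by_cases hs : inRange n ε z m ∧ (slicePos ε z m).1 ≤ s ∧ s ≤ (slicePos ε z m).2
    · have hs' : inRange n ε z m ∧ (slicePos ε z m).1 ≤ s' ∧ s' ≤ (slicePos ε z m).2 :=
        ⟨hs.1, hs.2.1.trans hss', hs'z.trans hz⟩
      rw [if_pos hs, if_pos hs']
    · rw [if_neg hs]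
      split_ifs with hs'
      · exact slicePos_coeff_nonneg hc hs'.1
      · exact le_rfl

end ASum

-- `ASum n ε c (n + 1 - p) (n - p + 1 - t)` is the coordinate `a_{l_t+1, r_p+1}` (with `l_0 + 1 = 1`).
theorem first_factor_chain_general
    (n p d : ℕ) (ε : ℕ → Bool) (c : ℤ × ℤ → ℤ)
    (hc : ∀ i j : ℤ, 1 ≤ i → i ≤ j → j ≤ (n : ℤ) → 0 ≤ c (i, j)) :
    ∀ t : ℕ, t ≤ d →
      0 ≤ ASum n ε c (n + 1 - p) ((n : ℤ) - (p : ℤ) + 1 - (t : ℤ)) ∧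
      (t < d →
        ASum n ε c (n + 1 - p) ((n : ℤ) - (p : ℤ) - (t : ℤ)) ≤
          ASum n ε c (n + 1 - p) ((n : ℤ) - (p : ℤ) + 1 - (t : ℤ))) :=
  fun t _ => ⟨ASum_nonneg hc _ _, fun _ => ASum_mono hc (by omega) (by omega)⟩

/-- (First-factor computation of Lemma 9.5.)  Let `e = r_p` be a right-oriented edge of
the quiver `Q`, `p` the number of right-oriented edges `≤ e` and `d` the number of
left-oriented edges `≤ e` (so `l_1 < ... < l_d` are the left edges below the threshold
`e`).  For `a = D(c) ∈ C_st(Q)` with `c` nonnegative, the coordinates of `a` appearing in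
the factor of `i(Q)` corresponding to the slice `T_{n+1-p}` satisfy the chain
`a_{1,r_p+1} ≥ a_{l_1+1,r_p+1} ≥ a_{l_2+1,r_p+1} ≥ ... ≥ a_{l_d+1,r_p+1} ≥ 0`,
where `a_{l_t+1,r_p+1} = Σ_{α ∈ T_{n+1-p}, (n-p+1-t) ∈ α} c_α` (so the chain is
`ASum` at the letters `n-p+1, n-p, ..., n-p+1-d`); it follows from the nonnegativity of
`c` together with the support-containment property of the roots in the slice. -/
theorem first_factor_chain
    (n e p d : ℕ) (ε : ℕ → Bool) (c : ℤ × ℤ → ℤ)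
    (hn : 1 ≤ n) (he1 : 1 ≤ e) (he2 : e ≤ n - 1) (her : ε e = true)
    (hp : p = ((Finset.Icc 1 e).filter (fun m => ε m = true)).card)
    (hd : d = ((Finset.Icc 1 e).filter (fun m => ε m = false)).card)
    (hc : ∀ i j : ℤ, 1 ≤ i → i ≤ j → j ≤ (n : ℤ) → 0 ≤ c (i, j)) :
    ∀ t : ℕ, t ≤ d →
      0 ≤ ASum n ε c (n + 1 - p) ((n : ℤ) - (p : ℤ) + 1 - (t : ℤ)) ∧
      (t < d →
        ASum n ε c (n + 1 - p) ((n : ℤ) - (p : ℤ) - (t : ℤ)) ≤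
          ASum n ε c (n + 1 - p) ((n : ℤ) - (p : ℤ) + 1 - (t : ℤ))) :=
  first_factor_chain_general n p d ε c hc
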